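/- Let H(S,V,N,T,−P,μ,U) = T·S − N·R·T + μ·N − U on ℝ⁷ with contact form η = dU − T dS + P dV − μ dN (Reeb field ∂/∂U). Then the contact Hamiltonian vector field of H is X_H = (S − NR) ∂/∂S + N ∂/∂N + P ∂/∂P + RT ∂/∂μ + U ∂/∂U; in particular the T- and V-components of X_H vanish (the flow is isothermal and isochoric). -/
import Mathlib


noncomputable section

/-- The thermodynamic phase space ℝ⁷ with Darboux coordinates
(q¹,q²,q³; p₁,p₂,p₃; z) = (S, V, N; T, −P, μ; U), so that the contact form
η = dz − pᵢ dqⁱ = dU − T dS + P dV − μ dN. -/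
abbrev Pt3 := (Fin 3 → ℝ) × (Fin 3 → ℝ) × ℝ

/-- The Reeb field ∂/∂U. -/
def bU : Pt3 := (0, 0, 1)

/-- η = dU − T dS + P dV − μ dN at x, evaluated on v. -/
def etaD (x v : Pt3) : ℝ := v.2.2 - ∑ i, x.2.1 i * v.1 i

/-- dη, evaluated on (v, w). -/
def dEtaD (v w : Pt3) : ℝ := ∑ i, (v.1 i * w.2.1 i - w.1 i * v.2.1 i)

/-- The ideal gas Hamiltonian H = T·S − N·Rg·T + μ·N − U (Rg the gas constant);
here S = x.1 0, V = x.1 1, N = x.1 2, T = x.2.1 0, −P = x.2.1 1, μ = x.2.1 2, U = x.2.2. -/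
def Hgas (Rg : ℝ) (x : Pt3) : ℝ :=
  x.2.1 0 * x.1 0 - x.1 2 * Rg * x.2.1 0 + x.2.1 2 * x.1 2 - x.2.2

/-- The claimed contact Hamiltonian vector field
X_H = (S − N Rg) ∂/∂S + N ∂/∂N + P ∂/∂P + Rg T ∂/∂μ + U ∂/∂U
(in the coordinates (S,V,N,T,−P,μ,U): note P ∂/∂P = (−P) ∂/∂(−P)). -/
def XHgas (Rg : ℝ) (x : Pt3) : Pt3 :=
  (![x.1 0 - x.1 2 * Rg, 0, x.1 2],
   ![0, x.2.1 1, Rg * x.2.1 0],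
   x.2.2)

def pq (i : Fin 3) : Pt3 →L[ℝ] ℝ :=
  (ContinuousLinearMap.proj i).comp (ContinuousLinearMap.fst ℝ _ _)
def pp (i : Fin 3) : Pt3 →L[ℝ] ℝ :=
  (ContinuousLinearMap.proj i).comp
    ((ContinuousLinearMap.fst ℝ _ _).comp (ContinuousLinearMap.snd ℝ _ _))
def pz : Pt3 →L[ℝ] ℝ :=
  (ContinuousLinearMap.snd ℝ _ _).comp (ContinuousLinearMap.snd ℝ _ _)

lemma fderiv_Hgas (Rg : ℝ) (x v : Pt3) :
    fderiv ℝ (Hgas Rg) x v =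
      v.2.1 0 * x.1 0 + x.2.1 0 * v.1 0 - (v.1 2 * Rg * x.2.1 0 + x.1 2 * Rg * v.2.1 0)
      + (v.2.1 2 * x.1 2 + x.2.1 2 * v.1 2) - v.2.2 := by
  have hq : ∀ i, HasFDerivAt (fun x : Pt3 => x.1 i) (pq i) x := fun i => (pq i).hasFDerivAt
  have hp : ∀ i, HasFDerivAt (fun x : Pt3 => x.2.1 i) (pp i) x := fun i => (pp i).hasFDerivAt
  have hz : HasFDerivAt (fun x : Pt3 => x.2.2) pz x := pz.hasFDerivAt
  have h := ((((hp 0).mul (hq 0)).sub (((hq 2).mul_const Rg).mul (hp 0))).add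
      ((hp 2).mul (hq 2))).sub hz
  have h' : HasFDerivAt (Hgas Rg) _ x := h
  rw [h'.fderiv]
  simp [pq, pp, pz]
  ring

lemma fderiv_Hgas_bU (Rg : ℝ) (x : Pt3) : fderiv ℝ (Hgas Rg) x bU = -1 := by
  rw [fderiv_Hgas]
  simp [bU]

/-- the contact Hamiltonian vector field of H = TS − NRgT + μN − U
(the unique X with ι_X η = −H and ι_X dη = dH − (∂H/∂U) η) is
X_H = (S − NRg) ∂/∂S + N ∂/∂N + P ∂/∂P + RgT ∂/∂μ + U ∂/∂U; in particular its T- and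
V-components vanish, so the flow is isothermal and isochoric. -/
theorem ideal_gas_hamiltonian_field (Rg : ℝ) (hRg : 0 < Rg) :
    ((∀ x, etaD x (XHgas Rg x) = -Hgas Rg x) ∧
     (∀ x v, dEtaD (XHgas Rg x) v =
        fderiv ℝ (Hgas Rg) x v - fderiv ℝ (Hgas Rg) x bU * etaD x v)) ∧
    (∀ X : Pt3 → Pt3,
      ((∀ x, etaD x (X x) = -Hgas Rg x) ∧
       (∀ x v, dEtaD (X x) v =
          fderiv ℝ (Hgas Rg) x v - fderiv ℝ (Hgas Rg) x bU * etaD x v)) →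
      X = XHgas Rg) ∧
    (∀ x, (XHgas Rg x).2.1 0 = 0 ∧ (XHgas Rg x).1 1 = 0) := by
  refine ⟨⟨fun x => ?_, fun x v => ?_⟩, fun X hX => ?_, fun x => ⟨rfl, rfl⟩⟩
  · simp [etaD, XHgas, Hgas, Fin.sum_univ_three]
    ring
  · rw [fderiv_Hgas, fderiv_Hgas_bU]
    simp [dEtaD, XHgas, etaD, Fin.sum_univ_three]
    ring
  · funext x
    have h1 := hX.1 x
    have h2 := hX.2 x
    simp only [etaD, Fin.sum_univ_three] at h1
    have key : ∀ v : Pt3, dEtaD (X x) v =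
        fderiv ℝ (Hgas Rg) x v - fderiv ℝ (Hgas Rg) x bU * etaD x v := h2
    have e1 := key ((0 : Fin 3 → ℝ), ![1, 0, 0], 0)
    have e2 := key ((0 : Fin 3 → ℝ), ![0, 1, 0], 0)
    have e3 := key ((0 : Fin 3 → ℝ), ![0, 0, 1], 0)
    have f1 := key (![1, 0, 0], (0 : Fin 3 → ℝ), 0)
    have f2 := key (![0, 1, 0], (0 : Fin 3 → ℝ), 0)
    have f3 := key (![0, 0, 1], (0 : Fin 3 → ℝ), 0)
    rw [fderiv_Hgas, fderiv_Hgas_bU] at e1 e2 e3 f1 f2 f3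
    simp [dEtaD, etaD, Fin.sum_univ_three] at e1 e2 e3 f1 f2 f3
    refine Prod.ext (funext fun i => ?_) (Prod.ext (funext fun i => ?_) ?_)
    · fin_cases i
      · exact e1
      · exact e2
      · exact e3
    · fin_cases i
      · exact f1
      · exact f2
      · exact f3
    · show (X x).2.2 = x.2.2
      simp only [Hgas] at h1
      linear_combination h1 + x.2.1 0 * e1 + x.2.1 1 * e2 + x.2.1 2 * e3
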